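/- Let N = 5. Then K(B_1, B_2, B_4) = 0; explicitly, {B_1B_2 − B_1 − B_2, B_4}_{S2} + {−B_2B_4/B_3, B_1}_{S2} + {−B_4B_1/B_5, B_2}_{S2} + {B_1B_2, B_4}_{C2N} = 0 in ℝ(B_1,…,B_5). -/
import Mathlib


noncomputable section

set_option maxHeartbeats 2000000

/-- The field `F = ℝ(B_1, …, B_N)` of rational functions in `N` variables
indexed by `ZMod N` (indices read modulo `N`). -/
abbrev RatF (N : ℕ) : Type := FractionRing (MvPolynomial (ZMod N) ℝ)

/-- The generator `B_i` of `ℝ(B_1, …, B_N)`. -/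
noncomputable def Bgen (N : ℕ) (i : ZMod N) : RatF N :=
  algebraMap (MvPolynomial (ZMod N) ℝ) (RatF N) (MvPolynomial.X i)

/-- For `N = 5`, `K(B_1, B_2, B_4) = 0`; explicitly,
`{B_1B_2 − B_1 − B_2, B_4}_S2 + {−B_2B_4/B_3, B_1}_S2 + {−B_4B_1/B_5, B_2}_S2 + {B_1B_2, B_4}_C2N = 0`. -/
theorem mixed_jacobiator_vanishes_N_five
    (bC bS : RatF 5 → RatF 5 → RatF 5)
    -- `{·,·}_{C2N}` is ℝ-bilinear, antisymmetric, and a derivation in each argument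
    (hC_add : ∀ x y z : RatF 5, bC (x + y) z = bC x z + bC y z)
    (hC_smul : ∀ (c : ℝ) (x y : RatF 5), bC (c • x) y = c • bC x y)
    (hC_anti : ∀ x y : RatF 5, bC x y = - bC y x)
    (hC_leib : ∀ x y z : RatF 5, bC (x * y) z = x * bC y z + y * bC x z)
    -- values of `{·,·}_{C2N}` on the generators
    (hC_gen1 : ∀ k : ZMod 5,
      bC (Bgen 5 k) (Bgen 5 (k + 1)) =
        Bgen 5 k * Bgen 5 (k + 1) - Bgen 5 k - Bgen 5 (k + 1))
    (hC_gen2 : ∀ k : ZMod 5,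
      bC (Bgen 5 k) (Bgen 5 (k + 2)) =
        - (Bgen 5 k * Bgen 5 (k + 2)) / Bgen 5 (k + 1))
    (hC_gen0 : ∀ i j : ZMod 5,
      j - i ≠ 1 → j - i ≠ -1 → j - i ≠ 2 → j - i ≠ -2 → bC (Bgen 5 i) (Bgen 5 j) = 0)
    -- `{·,·}_{S2}` is ℝ-bilinear, antisymmetric, and a derivation in each argument
    (hS_add : ∀ x y z : RatF 5, bS (x + y) z = bS x z + bS y z)
    (hS_smul : ∀ (c : ℝ) (x y : RatF 5), bS (c • x) y = c • bS x y)
    (hS_anti : ∀ x y : RatF 5, bS x y = - bS y x)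
    (hS_leib : ∀ x y z : RatF 5, bS (x * y) z = x * bS y z + y * bS x z)
    -- values of `{·,·}_{S2}` on the generators
    (hS_gen : ∀ i j : ZMod 5,
      bS (Bgen 5 i) (Bgen 5 j) =
        ((if i + 1 = j then (1 : ℝ) else 0) - (if i - 1 = j then (1 : ℝ) else 0)) •
          (Bgen 5 i * Bgen 5 j)) :
    (      bS (bC (Bgen 5 1) (Bgen 5 2)) (Bgen 5 4) +
      bS (bC (Bgen 5 2) (Bgen 5 4)) (Bgen 5 1) +
      bS (bC (Bgen 5 4) (Bgen 5 1)) (Bgen 5 2) +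
      bC (bS (Bgen 5 1) (Bgen 5 2)) (Bgen 5 4) +
      bC (bS (Bgen 5 2) (Bgen 5 4)) (Bgen 5 1) +
      bC (bS (Bgen 5 4) (Bgen 5 1)) (Bgen 5 2) = 0) ∧
    bS (Bgen 5 1 * Bgen 5 2 - Bgen 5 1 - Bgen 5 2) (Bgen 5 4) +
      bS (- (Bgen 5 2 * Bgen 5 4) / Bgen 5 3) (Bgen 5 1) +
      bS (- (Bgen 5 4 * Bgen 5 1) / Bgen 5 5) (Bgen 5 2) +
      bC (Bgen 5 1 * Bgen 5 2) (Bgen 5 4) = 0 :=  by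
  -- zero and negation rules
  have hC_zero : ∀ y : RatF 5, bC 0 y = 0 := fun y => by
    simpa using hC_smul 0 0 y
  have hS_zero : ∀ y : RatF 5, bS 0 y = 0 := fun y => by
    simpa using hS_smul 0 0 y
  have hS_neg : ∀ x y : RatF 5, bS (-x) y = - bS x y := fun x y => by
    simpa using hS_smul (-1) x y
  have hC_neg : ∀ x y : RatF 5, bC (-x) y = - bC x y := fun x y => by
    simpa using hC_smul (-1) x y
  have hS_sub : ∀ x y z : RatF 5, bS (x - y) z = bS x z - bS y z := fun x y z => by
    rw [sub_eq_add_neg, hS_add, hS_neg, sub_eq_add_neg]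
  have hS_one : ∀ y : RatF 5, bS 1 y = 0 := fun y => by
    have h := hS_leib 1 1 y
    rw [one_mul, one_mul] at h
    exact (add_eq_left.mp h.symm)
  -- generators are nonzero
  have hBne : ∀ i : ZMod 5, Bgen 5 i ≠ 0 := by
    intro i h
    have hinj := IsFractionRing.injective (MvPolynomial (ZMod 5) ℝ) (RatF 5)
    have : (MvPolynomial.X i : MvPolynomial (ZMod 5) ℝ) = 0 := hinj (by simpa [Bgen] using h)
    exact MvPolynomial.X_ne_zero i this
  -- inverse rule
  have hS_inv : ∀ v w : RatF 5, v ≠ 0 → bS v w = 0 → bS v⁻¹ w = 0 := by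
    intro v w hv h0
    have h1 : bS (v * v⁻¹) w = 0 := by rw [mul_inv_cancel₀ hv]; exact hS_one w
    rw [hS_leib, h0, mul_zero, add_zero] at h1
    rcases mul_eq_zero.mp h1 with h | h
    · exact absurd h hv
    · exact h
  -- S2 bracket on generators: zero cases
  have sz : ∀ i j : ZMod 5, i + 1 ≠ j → i - 1 ≠ j → bS (Bgen 5 i) (Bgen 5 j) = 0 := by
    intro i j h1 h2
    rw [hS_gen, if_neg h1, if_neg h2]
    simp
  have s14 : bS (Bgen 5 1) (Bgen 5 4) = 0 := sz 1 4 (by decide) (by decide)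
  have s24 : bS (Bgen 5 2) (Bgen 5 4) = 0 := sz 2 4 (by decide) (by decide)
  have s41 : bS (Bgen 5 4) (Bgen 5 1) = 0 := sz 4 1 (by decide) (by decide)
  have s31 : bS (Bgen 5 3) (Bgen 5 1) = 0 := sz 3 1 (by decide) (by decide)
  have s52 : bS (Bgen 5 5) (Bgen 5 2) = 0 := sz 5 2 (by decide) (by decide)
  have s42 : bS (Bgen 5 4) (Bgen 5 2) = 0 := sz 4 2 (by decide) (by decide)
  have s21 : bS (Bgen 5 2) (Bgen 5 1) = -(Bgen 5 2 * Bgen 5 1) := by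
    rw [hS_gen, if_neg (by decide), if_pos (by decide)]
    simp
  have s12 : bS (Bgen 5 1) (Bgen 5 2) = Bgen 5 1 * Bgen 5 2 := by
    rw [hS_gen, if_pos (by decide), if_neg (by decide)]
    simp
  -- C2N bracket on generators
  have c12 : bC (Bgen 5 1) (Bgen 5 2) =
      Bgen 5 1 * Bgen 5 2 - Bgen 5 1 - Bgen 5 2 := by
    have h := hC_gen1 1
    rwa [show ((1 : ZMod 5) + 1) = 2 by decide] at h
  have c24 : bC (Bgen 5 2) (Bgen 5 4) = -(Bgen 5 2 * Bgen 5 4) / Bgen 5 3 := by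
    have h := hC_gen2 2
    rwa [show ((2 : ZMod 5) + 2) = 4 by decide, show ((2 : ZMod 5) + 1) = 3 by decide] at h
  have c41 : bC (Bgen 5 4) (Bgen 5 1) = -(Bgen 5 4 * Bgen 5 1) / Bgen 5 5 := by
    have h := hC_gen2 4
    rwa [show ((4 : ZMod 5) + 2) = 1 by decide, show ((4 : ZMod 5) + 1) = 5 by decide] at h
  -- the key computation
  have key : bS (Bgen 5 1 * Bgen 5 2 - Bgen 5 1 - Bgen 5 2) (Bgen 5 4) +
      bS (- (Bgen 5 2 * Bgen 5 4) / Bgen 5 3) (Bgen 5 1) +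
      bS (- (Bgen 5 4 * Bgen 5 1) / Bgen 5 5) (Bgen 5 2) +
      bC (Bgen 5 1 * Bgen 5 2) (Bgen 5 4) = 0 := by
    have i31 : bS (Bgen 5 3)⁻¹ (Bgen 5 1) = 0 := hS_inv _ _ (hBne 3) s31
    have i52 : bS (Bgen 5 5)⁻¹ (Bgen 5 2) = 0 := hS_inv _ _ (hBne 5) s52
    have t1 : bS (Bgen 5 1 * Bgen 5 2 - Bgen 5 1 - Bgen 5 2) (Bgen 5 4) = 0 := by
      rw [hS_sub, hS_sub, hS_leib, s14, s24, mul_zero, mul_zero]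
      ring
    have t2 : bS (- (Bgen 5 2 * Bgen 5 4) / Bgen 5 3) (Bgen 5 1) =
        Bgen 5 1 * Bgen 5 2 * Bgen 5 4 / Bgen 5 3 := by
      rw [neg_div, hS_neg, div_eq_mul_inv, hS_leib, i31, mul_zero, hS_leib, s41, s21,
        mul_zero]
      field_simp
      ring
    have t3 : bS (- (Bgen 5 4 * Bgen 5 1) / Bgen 5 5) (Bgen 5 2) =
        -(Bgen 5 1 * Bgen 5 2 * Bgen 5 4) / Bgen 5 5 := by
      rw [neg_div, hS_neg, div_eq_mul_inv, hS_leib, i52, mul_zero, hS_leib, s12, s42,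
        mul_zero]
      field_simp
      ring
    have c14 : bC (Bgen 5 1) (Bgen 5 4) = Bgen 5 4 * Bgen 5 1 / Bgen 5 5 := by
      rw [hC_anti, c41]
      field_simp
    have t4 : bC (Bgen 5 1 * Bgen 5 2) (Bgen 5 4) =
        -(Bgen 5 1 * Bgen 5 2 * Bgen 5 4) / Bgen 5 3 +
          Bgen 5 1 * Bgen 5 2 * Bgen 5 4 / Bgen 5 5 := by
      rw [hC_leib, c24, c14]
      field_simp
    rw [t1, t2, t3, t4]
    ring
  constructor
  · have z5 : bC (bS (Bgen 5 2) (Bgen 5 4)) (Bgen 5 1) = 0 := by rw [s24]; exact hC_zero _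
    have z6 : bC (bS (Bgen 5 4) (Bgen 5 1)) (Bgen 5 2) = 0 := by rw [s41]; exact hC_zero _
    rw [c12, c24, c41, s12, z5, z6, add_zero, add_zero]
    exact key
  · exact key
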